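/- For all positive integers n and k: ∑_{m=0}^{min(n,k)} (m!)² S(n+1,m+1) S(k+1,m+1) = ∑_{j=0}^{k} A(k,j) ∑_{m=0}^{k-j} (-1)^m C(k-j, m) (k+1-m)^n. -/

import Mathlib

/-- Stirling numbers of the second kind: `stirling n r` is the number of
partitions of an `n`-element set into `r` non-empty blocks. -/
def stirling : ℕ → ℕ → ℕ
  | 0, 0 => 1
  | 0, _ + 1 => 0
  | _ + 1, 0 => 0
  | n + 1, r + 1 => (r + 1) * stirling n (r + 1) + stirling n r
/-- The descent set of a permutation of `Fin k`: positions `i` (with `i+1 < k`)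
such that `π i > π (i+1)`. -/
def descentSet (k : ℕ) (π : Equiv.Perm (Fin k)) : Finset (Fin (k - 1)) :=
  Finset.univ.filter fun i =>
    π ⟨i.1 + 1, by have := i.isLt; omega⟩ < π ⟨i.1, by have := i.isLt; omega⟩

/-- The Eulerian number `eulerian k j` counts permutations of `{1,…,k}`
with exactly `j - 1` descents (equivalently, `j` ascending runs). -/
def eulerian (k j : ℕ) : ℕ :=
  (Finset.univ.filter fun π : Equiv.Perm (Fin k) =>
    (descentSet k π).card + 1 = j).card

/-!
Both sides equal `∑ᵢ (-1)^(k-i) i! S(k,i) (i+1)^n`.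

On the left, `m! S(n+1,m+1)` is the `m`-th forward difference at `0` of `(x+1)^n` (read off from
the expansion of `(x+1)^n` in the binomial basis `C(x,m)`), i.e. an alternating binomial sum of the
`(i+1)^n`. Exchanging the sums leaves `∑ₘ (-1)^m C(m,i) m! S(k+1,m+1) = (-1)^k i! S(k,i)`, which
follows from the Stirling recurrence by induction on `k`.

On the right, taking `i`-th forward differences at `0` of Worpitzky's identity
`x^k = ∑ⱼ A(k,j) C(x+k-j,k)` gives `i! S(k,i) = ∑ⱼ A(k,j) C(k-j,k-i)`; reflecting the inner sum
finishes the proof. Worpitzky's identity comes from the recurrence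
`A(k+1,j+1) = (j+1) A(k,j+1) + (k+1-j) A(k,j)`, obtained by inserting the largest value into each
of the `k+1` gaps of a permutation: the number of descents is unchanged at the end and inside a
descent, and grows by one in every other gap.
-/

open Finset Nat fwdDiff

theorem neg_one_pow_sub {M : Type*} [Monoid M] [HasDistribNeg M] {m i : ℕ} (h : i ≤ m) :
    (-1 : M) ^ (m - i) = (-1) ^ m * (-1) ^ i := by
  obtain ⟨d, rfl⟩ := Nat.exists_eq_add_of_le h
  rw [Nat.add_sub_cancel_left, pow_add, ((Commute.neg_one_left _).pow_left i).eq, mul_assoc,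
    ← pow_add, ← two_mul, pow_mul, neg_one_sq, one_pow, mul_one]

theorem Nat.cast_mul_choose_eq (x m : ℕ) :
    (x : ℤ) * x.choose m = (m + 1) * x.choose (m + 1) + m * x.choose m := by
  rcases le_or_gt m x with h | h
  · have hc : ((x.choose (m + 1) * (m + 1) : ℕ) : ℤ) = x.choose m * (x - m) := by
      rw [choose_succ_right_eq]
      push_cast [h]
      ring
    push_cast at hc
    linear_combination -hc
  · simp [choose_eq_zero_of_lt h, choose_eq_zero_of_lt (Nat.lt_succ_of_lt h)]

theorem Nat.cast_add_one_mul_choose_eq (m i : ℕ) :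
    ((m + 1) * m.choose i : ℤ) = (i + 1) * (m.choose i + m.choose (i + 1)) := by
  exact_mod_cast (add_one_mul_choose_eq m i).trans (by rw [choose_succ_succ, mul_comm])

theorem Nat.mul_choose_add_eq {a k : ℕ} (x : ℕ) (h : a ≤ k) :
    x * (x + a).choose k =
      (k - a) * (x + a + 1).choose (k + 1) + (a + 1) * (x + a).choose (k + 1) := by
  rcases lt_or_ge (x + a) k with hx | hx
  · simp [choose_eq_zero_of_lt hx, choose_eq_zero_of_lt (Nat.lt_succ_of_lt hx),
      choose_eq_zero_of_lt (show x + a + 1 < k + 1 by omega)]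
  · have hrec := choose_succ_right_eq (x + a) k
    rw [choose_succ_succ]
    zify [h, hx] at hrec ⊢
    linear_combination -hrec

theorem fwdDiff_iter_sum_mul {α : Type*} (s : Finset α) (c : α → ℤ) (f : α → ℕ → ℤ) (i y : ℕ) :
    Δ_[1] ^[i] (fun x ↦ ∑ m ∈ s, c m * f m x) y = ∑ m ∈ s, c m * Δ_[1] ^[i] (f m) y := by
  have hfun : (fun x ↦ ∑ m ∈ s, c m * f m x) = ∑ m ∈ s, c m • f m := by
    ext x
    simp
  simp_rw [hfun, fwdDiff_iter_finsetSum, Finset.sum_apply, fwdDiff_iter_const_smul, Pi.smul_apply,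
    smul_eq_mul]

theorem fwdDiff_iter_sum_mul_choose_zero {N : ℕ} (c : ℕ → ℤ) (hc : ∀ m, N ≤ m → c m = 0)
    (i : ℕ) : Δ_[1] ^[i] (fun x : ℕ ↦ ∑ m ∈ range N, c m * x.choose m) 0 = c i := by
  rw [fwdDiff_iter_sum_mul]
  simp_rw [fwdDiff_iter_choose_zero, mul_ite, mul_one, mul_zero, sum_ite_eq, mem_range]
  split_ifs with h
  · rfl
  · exact (hc i (not_lt.1 h)).symm

theorem fwdDiff_iter_choose_add_zero {i k : ℕ} (a : ℕ) (h : i ≤ k) :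
    Δ_[1] ^[i] (fun x : ℕ ↦ ((x + a).choose k : ℤ)) 0 = a.choose (k - i) := by
  rw [fwdDiff_iter_comp_add (f := fun x : ℕ ↦ (x.choose k : ℤ)), zero_add]
  obtain ⟨d, rfl⟩ := Nat.exists_eq_add_of_le h
  rw [fwdDiff_iter_choose, Nat.add_sub_cancel_left]

theorem stirling_eq_stirlingSecond : stirling = Nat.stirlingSecond := by
  funext n r
  induction n generalizing r with
  | zero => cases r <;> rfl
  | succ n ih =>
    cases r with
    | zero => rfl
    | succ r => rw [stirling, stirlingSecond_succ_succ, ih, ih]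

namespace Nat

theorem cast_pow_eq_sum_stirlingSecond_mul_choose (x n : ℕ) :
    (x : ℤ) ^ n = ∑ m ∈ range (n + 1), (m ! * stirlingSecond n m : ℤ) * x.choose m := by
  induction n with
  | zero => simp
  | succ n ih =>
    have hshift : ∑ m ∈ range (n + 1), (m ! * stirlingSecond n m : ℤ) * (m * x.choose m) =
        ∑ m ∈ range (n + 1),
          ((m + 1) * ((m + 1)! * stirlingSecond n (m + 1)) : ℤ) * x.choose (m + 1) := by
      rw [sum_range_succ', sum_range_succ _ n, stirlingSecond_eq_zero_of_lt n.lt_succ_self]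
      simp only [cast_zero, zero_mul, mul_zero, add_zero, cast_add, cast_one]
      exact sum_congr rfl fun _ _ ↦ by ring
    calc (x : ℤ) ^ (n + 1)
        = ∑ m ∈ range (n + 1), (m ! * stirlingSecond n m : ℤ) *
            ((m + 1) * x.choose (m + 1) + m * x.choose m) := by
          rw [pow_succ, ih, sum_mul]
          exact sum_congr rfl fun m _ ↦ by rw [← cast_mul_choose_eq]; ring
      _ = ∑ m ∈ range (n + 1),
            ((m + 1)! * stirlingSecond (n + 1) (m + 1) : ℤ) * x.choose (m + 1) := by
          simp_rw [mul_add, sum_add_distrib]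
          rw [hshift, ← sum_add_distrib]
          refine sum_congr rfl fun m _ ↦ ?_
          rw [stirlingSecond_succ_succ, factorial_succ]
          push_cast
          ring
      _ = _ := by simp [sum_range_succ' _ (n + 1)]

theorem cast_add_one_pow_eq_sum_stirlingSecond_mul_choose (x n : ℕ) :
    ((x : ℤ) + 1) ^ n =
      ∑ m ∈ range (n + 1), (m ! * stirlingSecond (n + 1) (m + 1) : ℤ) * x.choose m := by
  induction n with
  | zero => simp [stirlingSecond_self]
  | succ n ih =>
    have hshift : ∑ m ∈ range (n + 1),
        (m ! * stirlingSecond (n + 1) (m + 1) : ℤ) * ((m + 1) * x.choose (m + 1)) =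
          ∑ m ∈ range (n + 2), (m ! * stirlingSecond (n + 1) m : ℤ) * x.choose m := by
      rw [sum_range_succ' _ (n + 1)]
      simp only [stirlingSecond_succ_zero, cast_zero, mul_zero, zero_mul, add_zero, factorial_succ]
      exact sum_congr rfl fun _ _ ↦ by push_cast; ring
    have hextend : ∑ m ∈ range (n + 1),
        (m ! * stirlingSecond (n + 1) (m + 1) : ℤ) * ((m + 1) * x.choose m) =
          ∑ m ∈ range (n + 2),
            (m ! * stirlingSecond (n + 1) (m + 1) : ℤ) * ((m + 1) * x.choose m) := by
      rw [sum_range_succ _ (n + 1), stirlingSecond_eq_zero_of_lt (n + 1).lt_succ_self]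
      simp
    calc ((x : ℤ) + 1) ^ (n + 1)
        = ∑ m ∈ range (n + 1),
              (m ! * stirlingSecond (n + 1) (m + 1) : ℤ) * ((m + 1) * x.choose (m + 1)) +
            ∑ m ∈ range (n + 1),
              (m ! * stirlingSecond (n + 1) (m + 1) : ℤ) * ((m + 1) * x.choose m) := by
          rw [pow_succ, ih, sum_mul, ← sum_add_distrib]
          exact sum_congr rfl fun m _ ↦ by
            linear_combination (m ! * stirlingSecond (n + 1) (m + 1) : ℤ) * cast_mul_choose_eq x m
      _ = _ := by
          rw [hshift, hextend, ← sum_add_distrib]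
          refine sum_congr rfl fun m _ ↦ ?_
          rw [stirlingSecond_succ_succ (n + 1) m]
          push_cast
          ring

theorem factorial_mul_stirlingSecond_eq_fwdDiff_iter (n m : ℕ) :
    (m ! * stirlingSecond n m : ℤ) = Δ_[1] ^[m] (fun x : ℕ ↦ (x : ℤ) ^ n) 0 := by
  simp_rw [cast_pow_eq_sum_stirlingSecond_mul_choose]
  rw [fwdDiff_iter_sum_mul_choose_zero]
  intro m hm
  simp [stirlingSecond_eq_zero_of_lt hm]

theorem factorial_mul_stirlingSecond_succ_succ_eq_sum (n m : ℕ) :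
    (m ! * stirlingSecond (n + 1) (m + 1) : ℤ) =
      ∑ i ∈ range (m + 1), (-1) ^ (m - i) * m.choose i * ((i : ℤ) + 1) ^ n := by
  have hΔ : (m ! * stirlingSecond (n + 1) (m + 1) : ℤ) =
      Δ_[1] ^[m] (fun x : ℕ ↦ ((x : ℤ) + 1) ^ n) 0 := by
    simp_rw [cast_add_one_pow_eq_sum_stirlingSecond_mul_choose]
    rw [fwdDiff_iter_sum_mul_choose_zero]
    intro m hm
    simp [stirlingSecond_eq_zero_of_lt (show n + 1 < m + 1 by omega)]
  rw [hΔ, fwdDiff_iter_eq_sum_shift]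
  simp

theorem sum_neg_one_pow_mul_choose_mul_factorial_mul_stirlingSecond (k i : ℕ) :
    ∑ m ∈ range (k + 1), ((-1) ^ m * m.choose i * (m ! * stirlingSecond (k + 1) (m + 1)) : ℤ) =
      (-1) ^ k * (i ! * stirlingSecond k i) := by
  induction k generalizing i with
  | zero => cases i <;> simp [stirlingSecond_self]
  | succ k ih =>
    have hsplit : ∑ m ∈ range (k + 2),
        ((-1) ^ m * m.choose i * (m ! * stirlingSecond (k + 2) (m + 1)) : ℤ) =
          ∑ m ∈ range (k + 1), (-1) ^ m * ((m + 1)! * stirlingSecond (k + 1) (m + 1) : ℤ) *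
            (m.choose i - (m + 1).choose i) := by
      simp_rw [stirlingSecond_succ_succ (k + 1), cast_add, cast_mul, mul_add, sum_add_distrib]
      rw [sum_range_succ _ (k + 1), sum_range_succ' _ (k + 1),
        stirlingSecond_eq_zero_of_lt (k + 1).lt_succ_self]
      simp only [stirlingSecond_succ_zero, cast_zero, mul_zero, add_zero, ← sum_add_distrib]
      exact sum_congr rfl fun m _ ↦ by rw [factorial_succ]; push_cast; ring
    rw [hsplit]
    cases i with
    | zero => simp
    | succ i =>
      calc _ = -(i + 1) * (∑ m ∈ range (k + 1),
              ((-1) ^ m * m.choose i * (m ! * stirlingSecond (k + 1) (m + 1)) : ℤ) +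
            ∑ m ∈ range (k + 1),
              ((-1) ^ m * m.choose (i + 1) * (m ! * stirlingSecond (k + 1) (m + 1)) : ℤ)) := by
            rw [← sum_add_distrib, mul_sum]
            refine sum_congr rfl fun m _ ↦ ?_
            rw [choose_succ_succ, factorial_succ]
            push_cast
            linear_combination (-(-1) ^ m * m ! * stirlingSecond (k + 1) (m + 1) : ℤ) *
              cast_add_one_mul_choose_eq m i
        _ = _ := by
            rw [ih, ih, stirlingSecond_succ_succ, factorial_succ]
            push_cast
            ring

theorem sum_neg_one_pow_sub_mul_choose_mul_factorial_mul_stirlingSecond {i k : ℕ} (h : i ≤ k) :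
    ∑ m ∈ range (k + 1),
        ((-1) ^ (m - i) * m.choose i * (m ! * stirlingSecond (k + 1) (m + 1)) : ℤ) =
      (-1) ^ (k - i) * (i ! * stirlingSecond k i) := by
  have hsign (m : ℕ) :
      (-1 : ℤ) ^ (m - i) * m.choose i = (-1) ^ i * ((-1) ^ m * m.choose i) := by
    rcases le_or_gt i m with hm | hm
    · rw [neg_one_pow_sub hm]
      ring
    · simp [choose_eq_zero_of_lt hm]
  calc _ = (-1) ^ i * ∑ m ∈ range (k + 1),
        ((-1) ^ m * m.choose i * (m ! * stirlingSecond (k + 1) (m + 1)) : ℤ) := by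
        rw [mul_sum]
        exact sum_congr rfl fun m _ ↦ by rw [hsign]; ring
    _ = _ := by
        rw [sum_neg_one_pow_mul_choose_mul_factorial_mul_stirlingSecond, neg_one_pow_sub h]
        ring

theorem sum_factorial_mul_stirlingSecond_mul_factorial_mul_stirlingSecond (n k : ℕ) :
    ∑ m ∈ range (k + 1),
        (m ! * stirlingSecond (n + 1) (m + 1) : ℤ) * (m ! * stirlingSecond (k + 1) (m + 1)) =
      ∑ i ∈ range (k + 1), (-1) ^ (k - i) * (i ! * stirlingSecond k i : ℤ) * ((i : ℤ) + 1) ^ n := by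
  calc _ = ∑ m ∈ range (k + 1), ∑ i ∈ range (k + 1), ((i : ℤ) + 1) ^ n *
          ((-1) ^ (m - i) * m.choose i * (m ! * stirlingSecond (k + 1) (m + 1))) := by
        refine sum_congr rfl fun m hm ↦ ?_
        rw [factorial_mul_stirlingSecond_succ_succ_eq_sum, sum_mul]
        refine sum_subset (range_subset_range.2 (by simpa using hm)) (fun i _ hi ↦ ?_) |>.trans
          (sum_congr rfl fun i _ ↦ by ring)
        simp [choose_eq_zero_of_lt (show m < i by simpa using hi)]
    _ = _ := by
        rw [sum_comm]
        refine sum_congr rfl fun i hi ↦ ?_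
        rw [← mul_sum, sum_neg_one_pow_sub_mul_choose_mul_factorial_mul_stirlingSecond
          (Nat.lt_succ_iff.1 (mem_range.1 hi))]
        ring

end Nat

theorem Fin.card_filter_univ_eq_card_filter_range (n : ℕ) (P : ℕ → Prop) [DecidablePred P] :
    (univ.filter fun i : Fin n ↦ P i).card = ((range n).filter P).card := by
  simp only [card_filter]
  exact Fin.sum_univ_eq_sum_range (fun i ↦ if P i then 1 else 0) n

def descentCount (w : ℕ → ℕ) (n : ℕ) : ℕ :=
  ((range n).filter fun i ↦ w (i + 1) < w i).card

theorem descentCount_succ (w : ℕ → ℕ) (n : ℕ) :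
    descentCount w (n + 1) =
      (if w 1 < w 0 then 1 else 0) + descentCount (fun i ↦ w (i + 1)) n := by
  simp only [descentCount, card_filter, sum_range_succ']
  ring

def insertAt (p M : ℕ) (w : ℕ → ℕ) (i : ℕ) : ℕ :=
  if i < p then w i else if i = p then M else w (i - 1)

/-- The gaps `p ≤ n + 1` of the word `w 0, …, w n` (gap `p` lies just before `w p`) into which a
letter larger than all others can be inserted without creating a descent: the end of the word and
the middle of each descent. -/
def descentSlots (w : ℕ → ℕ) (n : ℕ) : Finset ℕ :=
  (range (n + 2)).filter fun p ↦ p = n + 1 ∨ 0 < p ∧ w p < w (p - 1)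

theorem card_descentSlots (w : ℕ → ℕ) (n : ℕ) :
    (descentSlots w n).card = descentCount w n + 1 := by
  rw [descentSlots, card_filter, sum_range_succ, sum_range_succ', descentCount, card_filter,
    if_neg (by omega), if_pos (Or.inl rfl), add_zero]
  congr 1
  refine sum_congr rfl fun i hi ↦ if_congr ?_ rfl rfl
  simp [(mem_range.1 hi).ne]

theorem descentCount_insertAt {M : ℕ} {w : ℕ → ℕ} {n p : ℕ} (hp : p ≤ n + 1)
    (hw : ∀ i ≤ n, w i < M) :
    descentCount (insertAt p M w) (n + 1) =
      descentCount w n + if p ∈ descentSlots w n then 0 else 1 := by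
  simp only [descentSlots, mem_filter, mem_range, show p < n + 2 by omega, true_and]
  induction p generalizing n w with
  | zero =>
    rw [descentCount_succ]
    simp [insertAt, hw 0 (Nat.zero_le n), add_comm]
  | succ p ih =>
    rcases n with _ | n
    · obtain rfl : p = 0 := by omega
      simpa [descentCount, insertAt] using (hw 0 le_rfl).le
    have hshift :
        (fun i ↦ insertAt (p + 1) M w (i + 1)) = insertAt p M (fun i ↦ w (i + 1)) := by
      funext i
      simp only [insertAt, add_lt_add_iff_right, add_left_inj]
      split_ifs <;> first | rfl | (congr 1; omega)
    rw [descentCount_succ, hshift, ih (by omega) fun i hi ↦ hw (i + 1) (by omega),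
      descentCount_succ w]
    rcases p with _ | p
    · have := hw 0 (Nat.zero_le _)
      simp [insertAt]
      split_ifs <;> omega
    · simp [insertAt, add_assoc]

theorem card_filter_descentCount_add_eq (w : ℕ → ℕ) (n j : ℕ) :
    ((range (n + 2)).filter fun p ↦
        descentCount w n + (if p ∈ descentSlots w n then 0 else 1) = j).card =
      (if descentCount w n = j then j + 1 else 0) +
        if descentCount w n + 1 = j then n + 2 - j else 0 := by
  have hslots : (range (n + 2)).filter (· ∈ descentSlots w n) = descentSlots w n := by
    rw [filter_mem_eq_inter, inter_eq_right]
    exact filter_subset _ _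
  have hsplit := card_filter_add_card_filter_not (s := range (n + 2)) (· ∈ descentSlots w n)
  rw [card_range, hslots, card_descentSlots] at hsplit
  by_cases hj : descentCount w n = j
  · rw [if_pos hj, if_neg (by omega), add_zero, ← hj, ← card_descentSlots, ← hslots]
    congr 1
    exact filter_congr fun p _ ↦ by split_ifs <;> simp_all
  by_cases hj' : descentCount w n + 1 = j
  · rw [if_neg hj, if_pos hj', zero_add,
      filter_congr fun p _ ↦ show _ ↔ p ∉ descentSlots w n by split_ifs <;> simp_all]
    omega
  · rw [if_neg hj, if_neg hj', Finset.card_eq_zero, filter_eq_empty_iff]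
    intro p _
    split_ifs <;> omega

namespace Equiv.Perm

variable {k : ℕ}

/-- In one-line notation, `insertMax p σ` is `σ` with the new largest value `k` inserted at
position `p`. -/
def insertMax (p : Fin (k + 1)) (σ : Perm (Fin k)) : Perm (Fin (k + 1)) :=
  (finSuccEquiv' p).trans ((optionCongr σ).trans (finSuccEquiv' (Fin.last k)).symm)

@[simp]
theorem insertMax_apply_self (p : Fin (k + 1)) (σ : Perm (Fin k)) :
    insertMax p σ p = Fin.last k := by
  simp [insertMax]

@[simp]
theorem insertMax_apply_succAbove (p : Fin (k + 1)) (σ : Perm (Fin k)) (i : Fin k) :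
    insertMax p σ (p.succAbove i) = (σ i).castSucc := by
  simp [insertMax, Fin.succAbove_last]

theorem insertMax_injective :
    Function.Injective fun x : Fin (k + 1) × Perm (Fin k) ↦ insertMax x.1 x.2 := by
  rintro ⟨p, σ⟩ ⟨p', σ'⟩ h
  simp only at h
  obtain rfl : p = p' := by
    by_contra hne
    obtain ⟨i, rfl⟩ := Fin.exists_succAbove_eq hne
    have := DFunLike.congr_fun h (p'.succAbove i)
    simp only [insertMax_apply_self, insertMax_apply_succAbove] at this
    exact (Fin.castSucc_lt_last _).ne' this
  congr
  exact Equiv.ext fun i ↦ by simpa using DFunLike.congr_fun h (p.succAbove i)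

noncomputable def insertMaxEquiv (k : ℕ) : Fin (k + 1) × Perm (Fin k) ≃ Perm (Fin (k + 1)) :=
  .ofBijective _ <| (Fintype.bijective_iff_injective_and_card _).2
    ⟨insertMax_injective, by simp [Fintype.card_perm, factorial_succ]⟩

def word (σ : Perm (Fin k)) (i : ℕ) : ℕ :=
  if h : i < k then σ ⟨i, h⟩ else 0

theorem word_insertMax (p : Fin (k + 1)) (σ : Perm (Fin k)) :
    word (insertMax p σ) = insertAt p k (word σ) := by
  funext i
  simp only [word, insertAt]
  rcases lt_trichotomy i p with h | rfl | h
  · have hk : i < k := by omega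
    have : (⟨i, by omega⟩ : Fin (k + 1)) = p.succAbove ⟨i, hk⟩ :=
      (Fin.succAbove_of_castSucc_lt p ⟨i, hk⟩ h).symm
    simp [h, hk, this, show ¬k < i by omega]
  · simp [Nat.not_lt.2 (Fin.is_le p)]
  · by_cases hi : i < k + 1
    · have : (⟨i, hi⟩ : Fin (k + 1)) = p.succAbove ⟨i - 1, by omega⟩ := by
        rw [Fin.succAbove_of_le_castSucc _ _ (by simp [Fin.le_def]; omega)]
        ext
        simp
        omega
      simp [hi, this, show ¬i < p by omega, h.ne', show i - 1 < k by omega]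
    · simp [hi, show ¬i < p by omega, h.ne', show ¬i - 1 < k by omega]

theorem card_descentSet (σ : Perm (Fin k)) :
    (descentSet k σ).card = descentCount (word σ) (k - 1) := by
  rw [descentSet, descentCount, ← Fin.card_filter_univ_eq_card_filter_range]
  congr 1
  refine filter_congr fun i _ ↦ ?_
  simp [word, show i.1 + 1 < k by omega, show i.1 < k by omega]

theorem card_descentSet_insertMax (p : Fin (k + 2)) (σ : Perm (Fin (k + 1))) :
    (descentSet (k + 2) (insertMax p σ)).card = (descentSet (k + 1) σ).card +
      if (p : ℕ) ∈ descentSlots (word σ) k then 0 else 1 := by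
  rw [card_descentSet, card_descentSet, word_insertMax]
  exact descentCount_insertAt (Fin.is_le p) fun i hi ↦ by
    simpa [word, Nat.lt_succ_of_le hi] using (σ _).is_le

end Equiv.Perm

open Equiv Perm

theorem eulerian_zero_right (k : ℕ) : eulerian k 0 = 0 := by
  simp [eulerian]

theorem eulerian_one_one : eulerian 1 1 = 1 := by
  decide

theorem eulerian_eq_zero_of_lt {k j : ℕ} (hk : 0 < k) (h : k < j) : eulerian k j = 0 := by
  rw [eulerian, Finset.card_eq_zero, filter_eq_empty_iff]
  intro σ _
  have := (descentSet k σ).card_le_univ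
  simp only [Fintype.card_fin] at this
  omega

theorem eulerian_succ_succ (k j : ℕ) :
    eulerian (k + 2) (j + 1) =
      (j + 1) * eulerian (k + 1) (j + 1) + (k + 2 - j) * eulerian (k + 1) j := by
  have hfiber (σ : Perm (Fin (k + 1))) :
      (univ.filter fun p : Fin (k + 2) ↦
          (descentSet (k + 2) (insertMax p σ)).card + 1 = j + 1).card =
        (if (descentSet (k + 1) σ).card + 1 = j + 1 then j + 1 else 0) +
          if (descentSet (k + 1) σ).card + 1 = j then k + 2 - j else 0 := by
    simp_rw [card_descentSet_insertMax, add_right_cancel_iff]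
    rw [Fin.card_filter_univ_eq_card_filter_range (k + 2) fun p ↦ (descentSet (k + 1) σ).card +
      (if p ∈ descentSlots (word σ) k then 0 else 1) = j, card_descentSet, Nat.add_sub_cancel,
      card_filter_descentCount_add_eq]
  calc eulerian (k + 2) (j + 1)
      = (univ.filter fun x : Fin (k + 2) × Perm (Fin (k + 1)) ↦
          (descentSet (k + 2) (insertMax x.1 x.2)).card + 1 = j + 1).card :=
        (card_equiv (insertMaxEquiv (k + 1)) fun x ↦ by simp [insertMaxEquiv]).symm
    _ = ∑ σ : Perm (Fin (k + 1)),
          ((if (descentSet (k + 1) σ).card + 1 = j + 1 then j + 1 else 0) +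
            if (descentSet (k + 1) σ).card + 1 = j then k + 2 - j else 0) := by
        rw [card_filter, Fintype.sum_prod_type, sum_comm]
        exact sum_congr rfl fun σ _ ↦ by rw [← hfiber, card_filter]
    _ = _ := by
        simp only [eulerian, card_filter, sum_add_distrib, mul_sum, mul_ite, mul_one, mul_zero]

theorem worpitzky (x : ℕ) {k : ℕ} (hk : 0 < k) :
    x ^ k = ∑ j ∈ range (k + 1), eulerian k j * (x + (k - j)).choose k := by
  obtain ⟨k, rfl⟩ : ∃ k', k = k' + 1 := ⟨k - 1, by omega⟩
  clear hk
  induction k with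
  | zero => simp [sum_range_succ, eulerian_zero_right, eulerian_one_one]
  | succ k ih =>
    have hshift :
        ∑ j ∈ range (k + 2), eulerian (k + 1) j * (j * (x + (k + 2 - j)).choose (k + 2)) =
          ∑ j ∈ range (k + 2),
            (j + 1) * eulerian (k + 1) (j + 1) * (x + (k + 1 - j)).choose (k + 2) := by
      rw [sum_range_succ', sum_range_succ _ (k + 1),
        eulerian_eq_zero_of_lt (j := k + 1 + 1) k.succ_pos (by omega)]
      simp only [mul_zero, zero_mul, add_zero]
      exact sum_congr rfl fun j _ ↦ by rw [show k + 2 - (j + 1) = k + 1 - j by omega]; ring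
    calc x ^ (k + 2)
        = ∑ j ∈ range (k + 2), eulerian (k + 1) j * (x * (x + (k + 1 - j)).choose (k + 1)) := by
          rw [pow_succ', ih, mul_sum]
          exact sum_congr rfl fun j _ ↦ by ring
      _ = ∑ j ∈ range (k + 2), eulerian (k + 1) j * (j * (x + (k + 2 - j)).choose (k + 2) +
            (k + 2 - j) * (x + (k + 1 - j)).choose (k + 2)) := by
          refine sum_congr rfl fun j hj ↦ ?_
          have hj : j ≤ k + 1 := Nat.lt_succ_iff.1 (mem_range.1 hj)
          rw [Nat.mul_choose_add_eq x (Nat.sub_le (k + 1) j), Nat.sub_sub_self hj,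
            show x + (k + 1 - j) + 1 = x + (k + 2 - j) by omega,
            show k + 1 - j + 1 = k + 2 - j by omega]
      _ = ∑ j ∈ range (k + 2), eulerian (k + 2) (j + 1) * (x + (k + 1 - j)).choose (k + 2) := by
          simp_rw [mul_add, sum_add_distrib, hshift, eulerian_succ_succ, add_mul, sum_add_distrib]
          congr 1
          exact sum_congr rfl fun j _ ↦ by ring
      _ = _ := by
          rw [sum_range_succ' _ (k + 2), eulerian_zero_right]
          simp

theorem factorial_mul_stirlingSecond_eq_sum_eulerian {k i : ℕ} (hk : 0 < k) (hi : i ≤ k) :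
    (i ! * stirlingSecond k i : ℤ) =
      ∑ j ∈ range (k + 1), (eulerian k j : ℤ) * (k - j).choose (k - i) := by
  have hW : (fun x : ℕ ↦ (x : ℤ) ^ k) =
      fun x ↦ ∑ j ∈ range (k + 1), (eulerian k j : ℤ) * ((x + (k - j)).choose k : ℤ) :=
    funext fun x ↦ by exact_mod_cast worpitzky x hk
  rw [factorial_mul_stirlingSecond_eq_fwdDiff_iter, hW, fwdDiff_iter_sum_mul]
  simp_rw [fwdDiff_iter_choose_add_zero _ hi]

theorem polyBernoulli_eq_eulerian_incl_excl'_general (n k : ℕ) (hk : 0 < k) :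
    (∑ m ∈ Finset.range (min n k + 1),
        ((Nat.factorial m) ^ 2 * stirling (n + 1) (m + 1) * stirling (k + 1) (m + 1) : ℤ)) =
      ∑ j ∈ Finset.range (k + 1), (eulerian k j : ℤ) *
        ∑ m ∈ Finset.range (k - j + 1),
          (-1 : ℤ) ^ m * Nat.choose (k - j) m * ((k + 1 - m : ℕ) : ℤ) ^ n := by
  have hreflect (a : ℕ) (ha : a ≤ k) :
      ∑ i ∈ range (k + 1), (-1 : ℤ) ^ (k - i) * a.choose (k - i) * ((i : ℤ) + 1) ^ n =
        ∑ m ∈ range (a + 1), (-1 : ℤ) ^ m * a.choose m * ((k + 1 - m : ℕ) : ℤ) ^ n := by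
    rw [← sum_range_reflect]
    calc _ = ∑ m ∈ range (k + 1), (-1 : ℤ) ^ m * a.choose m * ((k + 1 - m : ℕ) : ℤ) ^ n :=
          sum_congr rfl fun m hm ↦ by
            have hm : m ≤ k := Nat.lt_succ_iff.1 (mem_range.1 hm)
            rw [show k + 1 - 1 - m = k - m by omega, Nat.sub_sub_self hm,
              show k + 1 - m = k - m + 1 by omega]
            push_cast
            ring
      _ = _ := (sum_subset (range_subset_range.2 (by omega)) fun m _ hm ↦ by
          simp [choose_eq_zero_of_lt (show a < m by simpa using hm)]).symm
  rw [stirling_eq_stirlingSecond]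
  calc _ = ∑ m ∈ range (k + 1),
        (m ! * stirlingSecond (n + 1) (m + 1) : ℤ) * (m ! * stirlingSecond (k + 1) (m + 1)) := by
        refine (sum_subset (range_subset_range.2 (by omega)) fun m hmk hm ↦ ?_).trans
          (sum_congr rfl fun m _ ↦ by ring)
        simp only [mem_range] at hmk hm
        simp [stirlingSecond_eq_zero_of_lt (show n + 1 < m + 1 by omega)]
    _ = ∑ i ∈ range (k + 1), (-1) ^ (k - i) * (i ! * stirlingSecond k i : ℤ) * ((i : ℤ) + 1) ^ n :=
        sum_factorial_mul_stirlingSecond_mul_factorial_mul_stirlingSecond n k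
    _ = ∑ j ∈ range (k + 1), (eulerian k j : ℤ) * ∑ i ∈ range (k + 1),
          (-1 : ℤ) ^ (k - i) * (k - j).choose (k - i) * ((i : ℤ) + 1) ^ n := by
        simp_rw [mul_sum]
        rw [sum_comm]
        refine sum_congr rfl fun i hi ↦ ?_
        rw [factorial_mul_stirlingSecond_eq_sum_eulerian hk (Nat.lt_succ_iff.1 (mem_range.1 hi)),
          mul_sum, sum_mul]
        exact sum_congr rfl fun j _ ↦ by ring
    _ = _ := sum_congr rfl fun j _ ↦ by rw [hreflect (k - j) (Nat.sub_le k j)]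

theorem polyBernoulli_eq_eulerian_incl_excl' (n k : ℕ) (hn : 0 < n) (hk : 0 < k) :
    (∑ m ∈ Finset.range (min n k + 1),
        ((Nat.factorial m) ^ 2 * stirling (n + 1) (m + 1) * stirling (k + 1) (m + 1) : ℤ)) =
      ∑ j ∈ Finset.range (k + 1), (eulerian k j : ℤ) *
        ∑ m ∈ Finset.range (k - j + 1),
          (-1 : ℤ) ^ m * Nat.choose (k - j) m * ((k + 1 - m : ℕ) : ℤ) ^ n :=
  polyBernoulli_eq_eulerian_incl_excl'_general n k hk
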